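/- Let h : Γ ⇀ Γ₁ be a Zakrzewski morphism and B, B' ⊆ Γ bisections. Then h(B) is a bisection of Γ₁, h(s(B)) = s₁(h(B)), and h(BB') = h(B)h(B'); i.e., h induces a group homomorphism between groups of bisections. -/
import Mathlib


/-- A groupoid on a carrier type `Γ`, with total (junk-valued off composable
pairs) multiplication, source `d`, target `r`, inverse `inv` and unit set `E`. -/
structure Gpd (Γ : Type*) where
  d : Γ → Γ
  r : Γ → Γ
  inv : Γ → Γ
  mul : Γ → Γ → Γ
  E : Set Γ
  d_mem : ∀ γ, d γ ∈ E
  r_mem : ∀ γ, r γ ∈ E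
  d_unit : ∀ e ∈ E, d e = e
  r_unit : ∀ e ∈ E, r e = e
  mul_d : ∀ {γ₁ γ₂}, d γ₁ = r γ₂ → d (mul γ₁ γ₂) = d γ₂
  mul_r : ∀ {γ₁ γ₂}, d γ₁ = r γ₂ → r (mul γ₁ γ₂) = r γ₁
  mul_assoc : ∀ {a b c}, d a = r b → d b = r c → mul (mul a b) c = mul a (mul b c)
  unit_mul : ∀ γ, mul (r γ) γ = γ
  mul_unit : ∀ γ, mul γ (d γ) = γ
  inv_inv : ∀ γ, inv (inv γ) = γ
  d_inv : ∀ γ, d (inv γ) = r γ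
  r_inv : ∀ γ, r (inv γ) = d γ
  mul_inv : ∀ γ, mul γ (inv γ) = r γ
  inv_mul : ∀ γ, mul (inv γ) γ = d γ

/-- Composition of relations: a relation `X ⇀ Y` is a `Y → X → Prop`. -/
def RelComp {X Y Z : Type*} (s : Z → Y → Prop) (r : Y → X → Prop) : Z → X → Prop :=
  fun z x => ∃ y, s z y ∧ r y x

/-- Cartesian product of relations. -/
def RelProd {X Y X' Y' : Type*} (h : Y → X → Prop) (h' : Y' → X' → Prop) :
    Y × Y' → X × X' → Prop :=
  fun p q => h p.1 q.1 ∧ h' p.2 q.2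

/-- The multiplication relation `m : Γ × Γ ⇀ Γ` of a groupoid. -/
def mRel {Γ : Type*} (G : Gpd Γ) : Γ → Γ × Γ → Prop :=
  fun c p => G.d p.1 = G.r p.2 ∧ c = G.mul p.1 p.2

/-- The inverse relation `s : Γ ⇀ Γ` of a groupoid. -/
def sRel {Γ : Type*} (G : Gpd Γ) : Γ → Γ → Prop := fun a b => a = G.inv b

/-- The unit relation `e : {1} ⇀ Γ` of a groupoid. -/
def eRel {Γ : Type*} (G : Gpd Γ) : Γ → Unit → Prop := fun a _ => a ∈ G.E

/-- A Zakrzewski morphism `h : Γ ⇀ Δ` is a relation (a subset of `Δ × Γ`) with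
`h∘m = m₁∘(h×h)`, `h∘s = s₁∘h`, `h∘e = e₁`. -/
def IsZMorphism {Γ Δ : Type*} (G : Gpd Γ) (D : Gpd Δ) (h : Δ → Γ → Prop) : Prop :=
  RelComp h (mRel G) = RelComp (mRel D) (RelProd h h) ∧
  RelComp h (sRel G) = RelComp (sRel D) h ∧
  RelComp h (eRel G) = eRel D

/-- A subgroupoid: closed under inverse and composition. -/
def IsSubgroupoid {Γ : Type*} (G : Gpd Γ) (A : Set Γ) : Prop :=
  (∀ g ∈ A, G.inv g ∈ A) ∧
  (∀ g₁ g₂, g₁ ∈ A → g₂ ∈ A → G.d g₁ = G.r g₂ → G.mul g₁ g₂ ∈ A)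

/-- Transitivity: any two units are connected by an arrow. -/
def IsTransitiveGpd {Γ : Type*} (G : Gpd Γ) : Prop :=
  ∀ e₁ ∈ G.E, ∀ e₂ ∈ G.E, ∃ γ, G.r γ = e₁ ∧ G.d γ = e₂

/-- The orbit relation on units. -/
def OrbitRel {Γ : Type*} (G : Gpd Γ) (e₁ e₂ : Γ) : Prop :=
  ∃ γ, G.r γ = e₁ ∧ G.d γ = e₂

/-- Setwise product of subsets of a groupoid. -/
def setMul {Γ : Type*} (G : Gpd Γ) (A B : Set Γ) : Set Γ :=
  {c | ∃ a ∈ A, ∃ b ∈ B, G.d a = G.r b ∧ c = G.mul a b}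

/-- Setwise inverse. -/
def setInv {Γ : Type*} (G : Gpd Γ) (A : Set Γ) : Set Γ := G.inv '' A

/-- A bisection: a subset on which both source and target restrict to
bijections onto the unit set. -/
def IsBisection {Γ : Type*} (G : Gpd Γ) (B : Set Γ) : Prop :=
  Set.BijOn G.d B G.E ∧ Set.BijOn G.r B G.E

/-- Image of a set under a relation `h : Γ ⇀ Δ`. -/
def relImage {Γ Δ : Type*} (h : Δ → Γ → Prop) (A : Set Γ) : Set Δ :=
  {δ | ∃ γ ∈ A, h δ γ}

/-- Kernel of a Zakrzewski morphism. -/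
def kerSet {Γ Δ : Type*} (D : Gpd Δ) (h : Δ → Γ → Prop) : Set Γ :=
  {γ | (∃ δ, h δ γ) ∧ ∀ δ, h δ γ → δ ∈ D.E}

/-- A functor between groupoids (preserving composability). -/
def IsFunctor {Γ Δ : Type*} (G : Gpd Γ) (D : Gpd Δ) (Φ : Γ → Δ) : Prop :=
  (∀ e ∈ G.E, Φ e ∈ D.E) ∧
  (∀ γ, Φ (G.inv γ) = D.inv (Φ γ)) ∧
  (∀ γ₁ γ₂, G.d γ₁ = G.r γ₂ →
    D.d (Φ γ₁) = D.r (Φ γ₂) ∧ Φ (G.mul γ₁ γ₂) = D.mul (Φ γ₁) (Φ γ₂))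

/-- The pair groupoid on a set `X`. -/
def pairGpd (X : Type*) : Gpd (X × X) where
  d p := (p.2, p.2)
  r p := (p.1, p.1)
  inv p := (p.2, p.1)
  mul p q := (p.1, q.2)
  E := {p | p.1 = p.2}
  d_mem _ := rfl
  r_mem _ := rfl
  d_unit e he := by obtain ⟨a, b⟩ := e; simp_all [Set.mem_setOf_eq]
  r_unit e he := by obtain ⟨a, b⟩ := e; simp_all [Set.mem_setOf_eq]
  mul_d _ := rfl
  mul_r _ := rfl
  mul_assoc _ _ := rfl
  unit_mul _ := rfl
  mul_unit _ := rfl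
  inv_inv _ := rfl
  d_inv _ := rfl
  r_inv _ := rfl
  mul_inv _ := rfl
  inv_mul _ := rfl

/-- A group viewed as a groupoid with a single unit. -/
def groupGpd (G : Type*) [Group G] : Gpd G where
  d _ := 1
  r _ := 1
  inv g := g⁻¹
  mul g h := g * h
  E := {1}
  d_unit _ he := he.symm
  r_unit _ he := he.symm
  d_mem _ := rfl
  r_mem _ := rfl
  mul_d _ := rfl
  mul_r _ := rfl
  mul_assoc _ _ := mul_assoc _ _ _
  unit_mul := one_mul
  mul_unit := mul_one
  inv_inv := inv_inv
  d_inv _ := rfl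
  r_inv _ := rfl
  mul_inv := mul_inv_cancel
  inv_mul := inv_mul_cancel

/-- The product groupoid `E × G × E` of a group and a pair groupoid. -/
def prodGpd (E G : Type*) [Group G] : Gpd (E × G × E) where
  d p := (p.2.2, 1, p.2.2)
  r p := (p.1, 1, p.1)
  inv p := (p.2.2, p.2.1⁻¹, p.1)
  mul p q := (p.1, p.2.1 * q.2.1, q.2.2)
  E := {p | p.1 = p.2.2 ∧ p.2.1 = 1}
  d_mem _ := ⟨rfl, rfl⟩
  r_mem _ := ⟨rfl, rfl⟩
  d_unit e he := by obtain ⟨a, g, b⟩ := e; obtain ⟨h1, h2⟩ := he; simp_all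
  r_unit e he := by obtain ⟨a, g, b⟩ := e; obtain ⟨h1, h2⟩ := he; simp_all
  mul_d _ := rfl
  mul_r _ := rfl
  mul_assoc _ _ := by simp [mul_assoc]
  unit_mul γ := by simp
  mul_unit γ := by simp
  inv_inv γ := by simp
  d_inv _ := rfl
  r_inv _ := rfl
  mul_inv γ := by simp
  inv_mul γ := by simp


section ZMAux

variable {Γ Δ : Type*} {G : Gpd Γ} {D : Gpd Δ} {h : Δ → Γ → Prop}

lemma zm_inv (hh : IsZMorphism G D h) {δ : Δ} {γ : Γ} (hd : h δ γ) :
    h (D.inv δ) (G.inv γ) := by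
  have e := congrFun (congrFun hh.2.1 (D.inv δ)) γ
  have hr : RelComp (sRel D) h (D.inv δ) γ := ⟨δ, rfl, hd⟩
  rw [← e] at hr
  obtain ⟨y, hy1, hy2⟩ := hr
  rw [sRel] at hy2
  rwa [hy2] at hy1

lemma zm_mul_bwd (hh : IsZMorphism G D h) {δ₁ δ₂ : Δ} {γ₁ γ₂ : Γ}
    (h1 : h δ₁ γ₁) (h2 : h δ₂ γ₂) (hc : D.d δ₁ = D.r δ₂) :
    G.d γ₁ = G.r γ₂ ∧ h (D.mul δ₁ δ₂) (G.mul γ₁ γ₂) := by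
  have e := congrFun (congrFun hh.1 (D.mul δ₁ δ₂)) (γ₁, γ₂)
  have hr : RelComp (mRel D) (RelProd h h) (D.mul δ₁ δ₂) (γ₁, γ₂) :=
    ⟨(δ₁, δ₂), ⟨hc, rfl⟩, h1, h2⟩
  rw [← e] at hr
  obtain ⟨γ, hγ, hcc, heq⟩ := hr
  exact ⟨hcc, heq ▸ hγ⟩

lemma zm_mul_fwd (hh : IsZMorphism G D h) {δ : Δ} {γ₁ γ₂ : Γ}
    (hc : G.d γ₁ = G.r γ₂) (hd : h δ (G.mul γ₁ γ₂)) :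
    ∃ δ₁ δ₂, D.d δ₁ = D.r δ₂ ∧ δ = D.mul δ₁ δ₂ ∧ h δ₁ γ₁ ∧ h δ₂ γ₂ := by
  have e := congrFun (congrFun hh.1 δ) (γ₁, γ₂)
  have hr : RelComp h (mRel G) δ (γ₁, γ₂) := ⟨G.mul γ₁ γ₂, hd, hc, rfl⟩
  rw [e] at hr
  obtain ⟨⟨δ₁, δ₂⟩, ⟨hcd, heq⟩, hh1, hh2⟩ := hr
  exact ⟨δ₁, δ₂, hcd, heq, hh1, hh2⟩

lemma zm_unit_fwd (hh : IsZMorphism G D h) {δ : Δ} {e : Γ}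
    (hd : h δ e) (he : e ∈ G.E) : δ ∈ D.E := by
  have eq := congrFun (congrFun hh.2.2 δ) ()
  have hr : RelComp h (eRel G) δ () := ⟨e, hd, he⟩
  rw [eq] at hr
  exact hr

lemma zm_unit_bwd (hh : IsZMorphism G D h) {δ : Δ} (hδ : δ ∈ D.E) :
    ∃ e ∈ G.E, h δ e := by
  have eq := congrFun (congrFun hh.2.2 δ) ()
  have hr : eRel D δ () := hδ
  rw [← eq] at hr
  obtain ⟨e, he1, he2⟩ := hr
  exact ⟨e, he2, he1⟩

end ZMAux

/-- A Zakrzewski morphism maps bisections to bisections, intertwines the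
setwise inverse, and is multiplicative on bisections; i.e. it induces a group
homomorphism between the groups of bisections. -/
theorem stmt_10 {Γ Δ : Type*} (G : Gpd Γ) (D : Gpd Δ) (h : Δ → Γ → Prop)
    (hh : IsZMorphism G D h) (B B' : Set Γ)
    (hB : IsBisection G B) (hB' : IsBisection G B') :
    IsBisection D (relImage h B) ∧
    relImage h (setInv G B) = setInv D (relImage h B) ∧
    relImage h (setMul G B B') = setMul D (relImage h B) (relImage h B') := by
  constructor
  · -- bisection
    constructor
    · -- d is a bijection onto the units
      refine ⟨fun δ _ => D.d_mem δ, ?_, ?_⟩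
      · -- InjOn
        rintro δ ⟨γ, hγB, hδγ⟩ δ' ⟨γ', hγ'B, hδ'γ'⟩ hdd
        have hinv : h (D.inv δ') (G.inv γ') := zm_inv hh hδ'γ'
        have hc : D.d δ = D.r (D.inv δ') := by rw [D.r_inv]; exact hdd
        obtain ⟨hcγ, hmul⟩ := zm_mul_bwd hh hδγ hinv hc
        have hγγ' : γ = γ' := hB.1.2.1 hγB hγ'B (by rw [hcγ, G.r_inv])
        subst hγγ'
        rw [G.mul_inv] at hmul
        have hu : D.mul δ (D.inv δ') ∈ D.E := zm_unit_fwd hh hmul (G.r_mem γ)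
        have hval : D.mul δ (D.inv δ') = D.r δ' := by
          rw [← D.d_unit _ hu, D.mul_d hc, D.d_inv]
        calc δ = D.mul δ (D.d δ) := (D.mul_unit δ).symm
          _ = D.mul δ (D.mul (D.inv δ') δ') := by rw [hdd, D.inv_mul]
          _ = D.mul (D.mul δ (D.inv δ')) δ' :=
              (D.mul_assoc hc (by rw [D.d_inv])).symm
          _ = D.mul (D.r δ') δ' := by rw [hval]
          _ = δ' := D.unit_mul δ'
      · -- SurjOn
        intro ε hε
        obtain ⟨e, heE, hεe⟩ := zm_unit_bwd hh hε
        obtain ⟨γ, hγB, hγd⟩ := hB.1.2.2 heE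
        have hεm : h ε (G.mul (G.inv γ) γ) := by rw [G.inv_mul, hγd]; exact hεe
        obtain ⟨δ₁, δ₂, hcd, heq, hh1, hh2⟩ :=
          zm_mul_fwd hh (by rw [G.d_inv]) hεm
        refine ⟨δ₂, ⟨γ, hγB, hh2⟩, ?_⟩
        rw [← D.d_unit ε hε, heq, D.mul_d hcd]
    · -- r is a bijection onto the units
      refine ⟨fun δ _ => D.r_mem δ, ?_, ?_⟩
      · -- InjOn
        rintro δ ⟨γ, hγB, hδγ⟩ δ' ⟨γ', hγ'B, hδ'γ'⟩ hrr
        have hinv : h (D.inv δ) (G.inv γ) := zm_inv hh hδγ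
        have hc : D.d (D.inv δ) = D.r δ' := by rw [D.d_inv]; exact hrr
        obtain ⟨hcγ, hmul⟩ := zm_mul_bwd hh hinv hδ'γ' hc
        have hγγ' : γ = γ' := hB.2.2.1 hγB hγ'B (by rw [← hcγ, G.d_inv])
        subst hγγ'
        rw [G.inv_mul] at hmul
        have hu : D.mul (D.inv δ) δ' ∈ D.E := zm_unit_fwd hh hmul (G.d_mem γ)
        have hval : D.mul (D.inv δ) δ' = D.d δ := by
          rw [← D.r_unit _ hu, D.mul_r hc, D.r_inv]
        calc δ = D.mul δ (D.d δ) := (D.mul_unit δ).symm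
          _ = D.mul δ (D.mul (D.inv δ) δ') := by rw [hval]
          _ = D.mul (D.mul δ (D.inv δ)) δ' :=
              (D.mul_assoc (by rw [D.r_inv]) hc).symm
          _ = D.mul (D.r δ') δ' := by rw [D.mul_inv, hrr]
          _ = δ' := D.unit_mul δ'
      · -- SurjOn
        intro ε hε
        obtain ⟨e, heE, hεe⟩ := zm_unit_bwd hh hε
        obtain ⟨γ, hγB, hγr⟩ := hB.2.2.2 heE
        have hεm : h ε (G.mul γ (G.inv γ)) := by rw [G.mul_inv, hγr]; exact hεe
        obtain ⟨δ₁, δ₂, hcd, heq, hh1, hh2⟩ :=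
          zm_mul_fwd hh (by rw [G.r_inv]) hεm
        refine ⟨δ₁, ⟨γ, hγB, hh1⟩, ?_⟩
        rw [← D.r_unit ε hε, heq, D.mul_r hcd]
  constructor
  · -- setInv
    ext δ
    constructor
    · rintro ⟨γ, ⟨b, hbB, rfl⟩, hδγ⟩
      refine ⟨D.inv δ, ⟨b, hbB, ?_⟩, D.inv_inv δ⟩
      have := zm_inv hh hδγ
      rwa [G.inv_inv] at this
    · rintro ⟨δ', ⟨b, hbB, hδ'b⟩, rfl⟩
      exact ⟨G.inv b, ⟨b, hbB, rfl⟩, zm_inv hh hδ'b⟩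
  · -- setMul
    ext δ
    constructor
    · rintro ⟨γ, ⟨γ₁, hγ₁, γ₂, hγ₂, hcγ, rfl⟩, hδγ⟩
      obtain ⟨δ₁, δ₂, hcd, heq, hh1, hh2⟩ := zm_mul_fwd hh hcγ hδγ
      exact ⟨δ₁, ⟨γ₁, hγ₁, hh1⟩, δ₂, ⟨γ₂, hγ₂, hh2⟩, hcd, heq⟩
    · rintro ⟨δ₁, ⟨γ₁, hγ₁, hh1⟩, δ₂, ⟨γ₂, hγ₂, hh2⟩, hcd, rfl⟩
      obtain ⟨hcγ, hmul⟩ := zm_mul_bwd hh hh1 hh2 hcd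
      exact ⟨G.mul γ₁ γ₂, ⟨γ₁, hγ₁, γ₂, hγ₂, hcγ, rfl⟩, hmul⟩
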